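/- arXiv:2008.10508 — 3 statements merged into one kernel-verified Lean document; each statement's English description precedes it below -/
import Mathlib

section
/- Let n ≥ 1 be a natural number, ε > 0, λ ∈ (0,1), and a < b real numbers. Let ψ : ℝ → ℝ be continuously differentiable on [a,b] with ψ(a) = 2ε, ψ(b) = 0, and −1−λ ≤ ψ'(r) ≤ −(1−λ) for all r ∈ [a,b]. Let γ : ℝ → ℝ be continuous with 0 ≤ γ ≤ 1, γ(ρ) = 1 for all ρ ∈ [0,ε], and γ(ρ) = 0 for all ρ ≥ 2ε. Then: (i) 0 < ∫_a^b γ(ψ(r)) · ψ(r)^n · (−ψ'(r)) dr ≤ (2ε)^{n+1}/(n+1); and (ii) ∫_a^b n · ψ(r)^{n−1} · ψ'(r)² · γ(ψ(r)) dr ≥ ((1−λ)(n+1)/(2^{n+1} ε)) · ∫_a^b γ(ψ(r)) · ψ(r)^n · (−ψ'(r)) dr. -/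
/-! Substituting `u = ψ r` turns both integrals into integrals over `[0, 2ε]`, on which the cutoff
`γ` lies between the indicator of `[0, ε]` and `1`. So the normalizing integral lies between
`ε^{n+1}/(n+1)` and `(2ε)^{n+1}/(n+1)`. Since `-ψ' ≥ 1 - λ ≥ 0`, we have `ψ'^2 ≥ (1 - λ)(-ψ')`,
which bounds the second integral below by `(1 - λ) ∫_0^{2ε} n u^{n-1} γ(u) du ≥ (1 - λ) ε^n`; and
`(1 - λ) ε^n` is exactly the constant `(1-λ)(n+1)/(2^{n+1}ε)` times `(2ε)^{n+1}/(n+1)`. -/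

open Set intervalIntegral MeasureTheory

theorem integral_comp_mul_neg_deriv {a b : ℝ} {ψ ψ' g : ℝ → ℝ}
    (hψ : ∀ r ∈ uIcc a b, HasDerivAt ψ (ψ' r) r) (hψ' : ContinuousOn ψ' (uIcc a b))
    (hg : Continuous g) :
    ∫ r in a..b, g (ψ r) * -ψ' r = ∫ u in ψ b..ψ a, g u := by
  rw [integral_symm (ψ a) (ψ b), ← integral_comp_mul_deriv hψ hψ' hg,
    ← intervalIntegral.integral_neg]
  simp only [Function.comp_apply, mul_neg]

theorem antitoneOn_Icc_of_hasDerivAt_nonpos {a b : ℝ} {ψ ψ' : ℝ → ℝ}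
    (hψ : ∀ r ∈ Icc a b, HasDerivAt ψ (ψ' r) r) (hψ' : ∀ r ∈ Icc a b, ψ' r ≤ 0) :
    AntitoneOn ψ (Icc a b) :=
  antitoneOn_of_hasDerivWithinAt_nonpos (convex_Icc a b)
    (HasDerivAt.continuousOn hψ)
    (fun r hr => (hψ r (interior_subset hr)).hasDerivWithinAt)
    fun r hr => hψ' r (interior_subset hr)

theorem integral_mul_pow_le_of_le_one {γ : ℝ → ℝ} {t : ℝ} (n : ℕ) (ht : 0 ≤ t)
    (hγ : IntervalIntegrable γ volume 0 t) (hγ1 : ∀ u ∈ Icc 0 t, γ u ≤ 1) :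
    ∫ u in 0..t, γ u * u ^ n ≤ t ^ (n + 1) / (n + 1) := by
  calc ∫ u in 0..t, γ u * u ^ n ≤ ∫ u in 0..t, u ^ n :=
        integral_mono_on ht (hγ.mul_continuousOn (continuous_pow n).continuousOn)
          (intervalIntegrable_pow n) fun u hu =>
            mul_le_of_le_one_left (pow_nonneg hu.1 n) (hγ1 u hu)
    _ = t ^ (n + 1) / (n + 1) := by simp [integral_pow]

theorem pow_succ_div_le_integral_mul_pow {γ : ℝ → ℝ} {s t : ℝ} (n : ℕ) (hs : 0 ≤ s) (hst : s ≤ t)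
    (hγ : IntervalIntegrable γ volume 0 t) (hγ0 : ∀ u ∈ Icc 0 t, 0 ≤ γ u)
    (hγ1 : ∀ u ∈ Icc 0 s, γ u = 1) :
    s ^ (n + 1) / (n + 1) ≤ ∫ u in 0..t, γ u * u ^ n := by
  calc s ^ (n + 1) / (n + 1) = ∫ u in 0..s, γ u * u ^ n := by
        rw [integral_congr fun u hu => by rw [hγ1 u (uIcc_of_le hs ▸ hu), one_mul], integral_pow]
        simp
    _ ≤ ∫ u in 0..t, γ u * u ^ n :=
        integral_mono_interval le_rfl hs hst
          ((ae_restrict_iff' measurableSet_Ioc).2 <| .of_forall fun u hu =>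
            mul_nonneg (hγ0 u (Ioc_subset_Icc_self hu)) (pow_nonneg hu.1.le n))
          (hγ.mul_continuousOn (continuous_pow n).continuousOn)

theorem pow_le_integral_nat_mul_mul_pow_pred {γ : ℝ → ℝ} {s t : ℝ} {n : ℕ} (hn : n ≠ 0)
    (hs : 0 ≤ s) (hst : s ≤ t) (hγ : IntervalIntegrable γ volume 0 t)
    (hγ0 : ∀ u ∈ Icc 0 t, 0 ≤ γ u) (hγ1 : ∀ u ∈ Icc 0 s, γ u = 1) :
    s ^ n ≤ ∫ u in 0..t, n * (γ u * u ^ (n - 1)) := by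
  obtain ⟨m, rfl⟩ : ∃ m, n = m + 1 := ⟨n - 1, by omega⟩
  have h := pow_succ_div_le_integral_mul_pow m hs hst hγ hγ0 hγ1
  rw [intervalIntegral.integral_const_mul, Nat.add_sub_cancel, Nat.cast_succ]
  rwa [div_le_iff₀' (by positivity)] at h

theorem mul_integral_mul_neg_le_integral_mul_sq {a b κ : ℝ} {f ψ' : ℝ → ℝ} (hab : a ≤ b)
    (hf : ContinuousOn f (Icc a b)) (hψ' : ContinuousOn ψ' (Icc a b))
    (hf0 : ∀ r ∈ Icc a b, 0 ≤ f r) (hκ : 0 ≤ κ) (hψ'κ : ∀ r ∈ Icc a b, ψ' r ≤ -κ) :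
    κ * ∫ r in a..b, f r * -ψ' r ≤ ∫ r in a..b, f r * ψ' r ^ 2 := by
  rw [← intervalIntegral.integral_const_mul]
  refine integral_mono_on hab
    ((continuousOn_const.mul (hf.mul hψ'.neg)).intervalIntegrable_of_Icc hab)
    ((hf.mul (hψ'.pow 2)).intervalIntegrable_of_Icc hab) fun r hr => ?_
  have hf0r := hf0 r hr
  have hψ'r := hψ'κ r hr
  nlinarith [mul_nonneg hf0r (sub_nonneg.2 hψ'r), mul_nonneg hf0r hκ]

theorem stmt_3_general (n : ℕ) (hn : 1 ≤ n) (ε lam a b : ℝ) (hε : 0 < ε)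
    (hlam : lam ∈ Set.Ioo (0 : ℝ) 1) (hab : a < b)
    (ψ ψ' : ℝ → ℝ)
    (hψd : ∀ r ∈ Set.Icc a b, HasDerivAt ψ (ψ' r) r)
    (hψ'cont : ContinuousOn ψ' (Set.Icc a b))
    (hψa : ψ a = 2 * ε) (hψb : ψ b = 0)
    (hψ'bd : ∀ r ∈ Set.Icc a b, -1 - lam ≤ ψ' r ∧ ψ' r ≤ -(1 - lam))
    (γ : ℝ → ℝ) (hγ : Continuous γ)
    (hγ01 : ∀ ρ, 0 ≤ γ ρ ∧ γ ρ ≤ 1)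
    (hγ1 : ∀ ρ ∈ Set.Icc (0 : ℝ) ε, γ ρ = 1) :
    (0 < (∫ r in a..b, γ (ψ r) * ψ r ^ n * (-(ψ' r))) ∧
      (∫ r in a..b, γ (ψ r) * ψ r ^ n * (-(ψ' r))) ≤ (2 * ε) ^ (n + 1) / (n + 1)) ∧
    ((1 - lam) * (n + 1) / (2 ^ (n + 1) * ε)) *
        (∫ r in a..b, γ (ψ r) * ψ r ^ n * (-(ψ' r))) ≤
      ∫ r in a..b, (n : ℝ) * ψ r ^ (n - 1) * (ψ' r) ^ 2 * γ (ψ r) := by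
  have hlam1 : 0 ≤ 1 - lam := by linarith [hlam.2]
  have hψc : ContinuousOn ψ (Icc a b) := HasDerivAt.continuousOn hψd
  have hψ0 : ∀ r ∈ Icc a b, 0 ≤ ψ r := fun r hr =>
    hψb ▸ antitoneOn_Icc_of_hasDerivAt_nonpos hψd
      (fun r hr => (hψ'bd r hr).2.trans (neg_nonpos.2 hlam1)) hr (right_mem_Icc.2 hab.le) hr.2
  have subst : ∀ g : ℝ → ℝ, Continuous g →
      ∫ r in a..b, g (ψ r) * -ψ' r = ∫ u in 0..2 * ε, g u := fun g hg => by
    rw [integral_comp_mul_neg_deriv (fun r hr => hψd r (uIcc_of_le hab.le ▸ hr))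
      (uIcc_of_le hab.le ▸ hψ'cont) hg, hψa, hψb]
  have hγi : IntervalIntegrable γ volume 0 (2 * ε) := hγ.intervalIntegrable _ _
  have hI : ∫ r in a..b, γ (ψ r) * ψ r ^ n * -ψ' r = ∫ u in 0..2 * ε, γ u * u ^ n :=
    subst (fun u => γ u * u ^ n) (by fun_prop)
  have hIle := hI ▸ integral_mul_pow_le_of_le_one n (by positivity) hγi fun u _ => (hγ01 u).2
  refine ⟨⟨?_, hIle⟩, ?_⟩
  · rw [hI]
    exact (by positivity : (0 : ℝ) < ε ^ (n + 1) / (n + 1)).trans_le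
      (pow_succ_div_le_integral_mul_pow n hε.le (by linarith) hγi (fun u _ => (hγ01 u).1) hγ1)
  calc (1 - lam) * (n + 1) / (2 ^ (n + 1) * ε) * ∫ r in a..b, γ (ψ r) * ψ r ^ n * -ψ' r
      ≤ (1 - lam) * (n + 1) / (2 ^ (n + 1) * ε) * ((2 * ε) ^ (n + 1) / (n + 1)) :=
        mul_le_mul_of_nonneg_left hIle (by positivity)
    _ = (1 - lam) * ε ^ n := by field_simp; ring
    _ ≤ (1 - lam) * ∫ u in 0..2 * ε, n * (γ u * u ^ (n - 1)) :=
        mul_le_mul_of_nonneg_left (pow_le_integral_nat_mul_mul_pow_pred (by omega) hε.le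
          (by linarith) hγi (fun u _ => (hγ01 u).1) hγ1) hlam1
    _ = (1 - lam) * ∫ r in a..b, n * (γ (ψ r) * ψ r ^ (n - 1)) * -ψ' r := by
        rw [subst (fun u => n * (γ u * u ^ (n - 1))) (by fun_prop)]
    _ ≤ ∫ r in a..b, n * (γ (ψ r) * ψ r ^ (n - 1)) * ψ' r ^ 2 :=
        mul_integral_mul_neg_le_integral_mul_sq hab.le (by fun_prop) hψ'cont
          (fun r hr => by have := (hγ01 (ψ r)).1; have := hψ0 r hr; positivity) hlam1
          fun r hr => (hψ'bd r hr).2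
    _ = ∫ r in a..b, (n : ℝ) * ψ r ^ (n - 1) * (ψ' r) ^ 2 * γ (ψ r) :=
        integral_congr fun r _ => by ring

/-- Normalized estimate from the proof of the paper's Proposition 5.2:
(i) `0 < ∫_a^b γ(ψ) ψⁿ (-ψ') dr ≤ (2ε)^{n+1}/(n+1)`, and
(ii) `∫_a^b n ψ^{n-1} (ψ')² γ(ψ) dr ≥ ((1-λ)(n+1)/(2^{n+1} ε)) ∫_a^b γ(ψ) ψⁿ (-ψ') dr`. -/
theorem stmt_3 (n : ℕ) (hn : 1 ≤ n) (ε lam a b : ℝ) (hε : 0 < ε)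
    (hlam : lam ∈ Set.Ioo (0 : ℝ) 1) (hab : a < b)
    (ψ ψ' : ℝ → ℝ)
    (hψd : ∀ r ∈ Set.Icc a b, HasDerivAt ψ (ψ' r) r)
    (hψ'cont : ContinuousOn ψ' (Set.Icc a b))
    (hψa : ψ a = 2 * ε) (hψb : ψ b = 0)
    (hψ'bd : ∀ r ∈ Set.Icc a b, -1 - lam ≤ ψ' r ∧ ψ' r ≤ -(1 - lam))
    (γ : ℝ → ℝ) (hγ : Continuous γ)
    (hγ01 : ∀ ρ, 0 ≤ γ ρ ∧ γ ρ ≤ 1)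
    (hγ1 : ∀ ρ ∈ Set.Icc (0 : ℝ) ε, γ ρ = 1)
    (hγ0 : ∀ ρ, 2 * ε ≤ ρ → γ ρ = 0) :
    (0 < (∫ r in a..b, γ (ψ r) * ψ r ^ n * (-(ψ' r))) ∧
      (∫ r in a..b, γ (ψ r) * ψ r ^ n * (-(ψ' r))) ≤ (2 * ε) ^ (n + 1) / (n + 1)) ∧
    ((1 - lam) * (n + 1) / (2 ^ (n + 1) * ε)) *
        (∫ r in a..b, γ (ψ r) * ψ r ^ n * (-(ψ' r))) ≤
      ∫ r in a..b, (n : ℝ) * ψ r ^ (n - 1) * (ψ' r) ^ 2 * γ (ψ r) :=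
  stmt_3_general n hn ε lam a b hε hlam hab ψ ψ' hψd hψ'cont hψa hψb hψ'bd γ hγ hγ01 hγ1
end

section
/- Let n ≥ 1 be a natural number, ε > 0, λ ∈ (0,1), M ≥ 0, and a < b real numbers. Let ψ : ℝ → ℝ be twice continuously differentiable on [a,b] with ψ(a) = 2ε, ψ(b) = 0, and −1−λ ≤ ψ'(r) ≤ −(1−λ) for all r ∈ [a,b]. Let γ : ℝ → ℝ be continuously differentiable with 0 ≤ γ ≤ 1, γ(ρ) = 1 for all ρ ∈ [0,ε], and γ(ρ) = 0 for all ρ ≥ 2ε. Set D := ∫_a^b γ(ψ(s)) ψ(s)^n ψ'(s) ds and F(r) := (1/D) ∫_a^r γ(ψ(s)) ψ(s)^n ψ'(s) ds. Let K : ℝ → ℝ be integrable on [a,b] with |K(r)| ≤ M for all r ∈ [a,b]. Then ∫_a^b F''(r) dr + ∫_a^b n · γ(ψ(r)) · ψ(r)^{n−1} · ψ'(r)² / (−D) dr + ∫_a^b F(r) · K(r) dr ≥ (1−λ)(n+1)/(2^{n+1} ε) − (b−a) · M. -/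
/-!
Substituting `u = ψ r` gives `D = -J` with `J = ∫₀^{2ε} γ(u) uⁿ du`, and
`F r = J⁻¹ ∫_{ψ r}^{2ε} γ(u) uⁿ du`, which lies in `[0, 1]` because `ψ` decreases from `2ε`
to `0`. The first integral is `F'(b) - F'(a) = 0`, since `F' = D⁻¹ γ(ψ) ψⁿ ψ'` vanishes at
both ends. In the second, `ψ'² ≥ (1 - λ)(-ψ')`, and substituting again bounds it below by
`(1 - λ) J⁻¹ ∫₀^{2ε} n γ(u) uⁿ⁻¹ du ≥ (1 - λ) εⁿ / J`, while `J ≤ (2ε)ⁿ⁺¹ / (n + 1)`.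
The third is at least `-(b - a) M` because `|F| ≤ 1`.
-/

open Set intervalIntegral Filter Topology

section CutoffMoments

variable {γ : ℝ → ℝ} {ε c : ℝ}

theorem pow_succ_div_le_integral_mul_pow_s5 (hγ : Continuous γ) (hγ_nonneg : ∀ u, 0 ≤ γ u)
    (hγ_one : ∀ u ∈ Icc 0 ε, γ u = 1) (hε : 0 ≤ ε) (hεc : ε ≤ c) (k : ℕ) :
    ε ^ (k + 1) / (k + 1) ≤ ∫ u in 0..c, γ u * u ^ k := by
  have hint (x y : ℝ) : IntervalIntegrable (fun u => γ u * u ^ k) MeasureTheory.volume x y :=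
    (hγ.mul (continuous_pow k)).intervalIntegrable x y
  have h_head : ∫ u in 0..ε, γ u * u ^ k = ε ^ (k + 1) / (k + 1) := by
    rw [integral_congr (g := fun u => u ^ k) fun u hu => by
      simp [hγ_one u (uIcc_of_le hε ▸ hu)], integral_pow]
    simp
  have h_tail : 0 ≤ ∫ u in ε..c, γ u * u ^ k :=
    integral_nonneg hεc fun u hu => mul_nonneg (hγ_nonneg u) (pow_nonneg (hε.trans hu.1) k)
  rw [← integral_add_adjacent_intervals (hint 0 ε) (hint ε c), h_head]
  linarith

theorem integral_mul_pow_le (hγ : Continuous γ) (hγ_le : ∀ u, γ u ≤ 1) (hc : 0 ≤ c) (k : ℕ) :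
    ∫ u in 0..c, γ u * u ^ k ≤ c ^ (k + 1) / (k + 1) := by
  calc ∫ u in 0..c, γ u * u ^ k ≤ ∫ u in 0..c, u ^ k :=
        integral_mono_on hc ((hγ.mul (continuous_pow k)).intervalIntegrable 0 c)
          ((continuous_pow k).intervalIntegrable 0 c) fun u hu =>
          mul_le_of_le_one_left (pow_nonneg hu.1 k) (hγ_le u)
    _ = c ^ (k + 1) / (k + 1) := by simp [integral_pow]

end CutoffMoments

theorem mem_Icc_of_hasDerivAt_nonpos {ψ ψ' : ℝ → ℝ} {a b r : ℝ}
    (hψ : ∀ x ∈ Icc a b, HasDerivAt ψ (ψ' x) x) (hψ' : ∀ x ∈ Icc a b, ψ' x ≤ 0)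
    (hr : r ∈ Icc a b) : ψ r ∈ Icc (ψ b) (ψ a) := by
  have hanti : AntitoneOn ψ (Icc a b) :=
    antitoneOn_of_hasDerivWithinAt_nonpos (convex_Icc a b)
      (fun x hx => (hψ x hx).continuousAt.continuousWithinAt)
      (fun x hx => (hψ x (interior_subset hx)).hasDerivWithinAt)
      fun x hx => hψ' x (interior_subset hx)
  exact ⟨hanti hr ⟨hr.1.trans hr.2, le_rfl⟩ hr.2, hanti ⟨le_rfl, hr.1.trans hr.2⟩ hr hr.1⟩

theorem hasDerivAt_integral_of_continuousOn {f : ℝ → ℝ} {a b x : ℝ}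
    (hf : ContinuousOn f (Icc a b)) (hx : x ∈ Ioo a b) :
    HasDerivAt (fun r => ∫ s in a..r, f s) (f x) x := by
  have hnhds : Icc a b ∈ 𝓝 x := Icc_mem_nhds hx.1 hx.2
  exact integral_hasDerivAt_right
    ((hf.mono (Icc_subset_Icc_right hx.2.le)).intervalIntegrable_of_Icc hx.1.le)
    ⟨Icc a b, hnhds, hf.aestronglyMeasurable measurableSet_Icc⟩ (hf.continuousAt hnhds)

theorem integral_deriv_deriv_eq_sub {F g g' : ℝ → ℝ} {a b : ℝ} (hab : a ≤ b)
    (hF : ∀ x ∈ Ioo a b, HasDerivAt F (g x) x) (hg : ∀ x ∈ Icc a b, HasDerivAt g (g' x) x)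
    (hg' : ContinuousOn g' (Icc a b)) :
    ∫ x in a..b, deriv (deriv F) x = g b - g a := by
  have h_eq : EqOn (deriv (deriv F)) g' (Ioo a b) := fun x hx => by
    have hFg : deriv F =ᶠ[𝓝 x] g :=
      eventually_of_mem (Ioo_mem_nhds hx.1 hx.2) fun y hy => (hF y hy).deriv
    rw [hFg.deriv_eq, (hg x (Ioo_subset_Icc_self hx)).deriv]
  rw [integral_congr_Ioo_of_le hab h_eq]
  exact integral_eq_sub_of_hasDerivAt (uIcc_of_le hab ▸ hg) (hg'.intervalIntegrable_of_Icc hab)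

theorem integral_deriv_deriv_const_mul_primitive {f f' : ℝ → ℝ} {a b : ℝ} (c : ℝ) (hab : a ≤ b)
    (hf : ∀ x ∈ Icc a b, HasDerivAt f (f' x) x) (hf' : ContinuousOn f' (Icc a b)) :
    ∫ x in a..b, deriv (deriv fun r => c * ∫ s in a..r, f s) x = c * f b - c * f a :=
  integral_deriv_deriv_eq_sub hab
    (fun _ hx => (hasDerivAt_integral_of_continuousOn
      (fun y hy => (hf y hy).continuousAt.continuousWithinAt) hx).const_mul c)
    (fun x hx => (hf x hx).const_mul c) (continuousOn_const.mul hf')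

theorem mul_integral_le_integral_comp_mul_deriv_sq {ψ ψ' G : ℝ → ℝ} {a b μ : ℝ} (hab : a ≤ b)
    (hψ : ∀ r ∈ Icc a b, HasDerivAt ψ (ψ' r) r) (hψ' : ContinuousOn ψ' (Icc a b))
    (hμ : 0 ≤ μ) (hψ'_le : ∀ r ∈ Icc a b, μ ≤ -ψ' r) (hG : Continuous G)
    (hG_nonneg : ∀ r ∈ Icc a b, 0 ≤ G (ψ r)) :
    μ * ∫ u in ψ b..ψ a, G u ≤ ∫ r in a..b, G (ψ r) * ψ' r ^ 2 := by
  have hψc : ContinuousOn ψ (Icc a b) := fun r hr => (hψ r hr).continuousAt.continuousWithinAt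
  have hsub : ∫ u in ψ b..ψ a, G u = ∫ r in a..b, G (ψ r) * -ψ' r := by
    rw [integral_symm, ← integral_comp_mul_deriv (uIcc_of_le hab ▸ hψ) (uIcc_of_le hab ▸ hψ') hG,
      ← integral_neg]
    simp only [Function.comp, mul_neg]
  rw [hsub, ← integral_const_mul]
  refine integral_mono_on hab ?_ ?_ fun r hr => ?_
  · exact (continuousOn_const.mul ((hG.comp_continuousOn hψc).mul hψ'.neg)).intervalIntegrable_of_Icc
      hab
  · exact ((hG.comp_continuousOn hψc).mul (hψ'.pow 2)).intervalIntegrable_of_Icc hab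
  · have h := mul_nonneg (mul_nonneg (hG_nonneg r hr) (hμ.trans (hψ'_le r hr)))
      (sub_nonneg.2 (hψ'_le r hr))
    nlinarith

theorem neg_mul_le_integral_of_abs_le {f : ℝ → ℝ} {a b M : ℝ} (hab : a ≤ b)
    (hf : ∀ x ∈ Icc a b, |f x| ≤ M) : -((b - a) * M) ≤ ∫ x in a..b, f x := by
  have h := norm_integral_le_of_norm_le_const (f := f) fun x hx =>
    hf x (Ioc_subset_Icc_self (uIoc_of_le hab ▸ hx))
  rw [Real.norm_eq_abs, abs_of_nonneg (sub_nonneg.2 hab)] at h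
  linarith [neg_abs_le (∫ x in a..b, f x)]

theorem abs_integral_le_integral_of_mem_Icc {f : ℝ → ℝ} {c x : ℝ} (hf : Continuous f)
    (hf_nonneg : ∀ u ∈ Icc 0 c, 0 ≤ f u) (hx : x ∈ Icc 0 c) :
    |∫ u in c..x, f u| ≤ ∫ u in 0..c, f u := by
  have hc : 0 ≤ c := hx.1.trans hx.2
  calc |∫ u in c..x, f u| ≤ |∫ u in 0..c, f u| := by
        refine abs_integral_mono_interval ?_ ?_ (hf.intervalIntegrable 0 c)
        · rw [uIoc_of_ge hx.2, uIoc_of_le hc]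
          exact Ioc_subset_Ioc_left hx.1
        · exact MeasureTheory.ae_restrict_of_forall_mem measurableSet_uIoc fun u hu =>
            hf_nonneg u (Ioc_subset_Icc_self (uIoc_of_le hc ▸ hu))
    _ = ∫ u in 0..c, f u :=
        abs_of_nonneg (integral_nonneg hc fun u hu => hf_nonneg u hu)

theorem succ_div_le_integral_div_integral {γ : ℝ → ℝ} {ε : ℝ} {n : ℕ} (hn : 1 ≤ n) (hε : 0 < ε)
    (hγ : Continuous γ) (hγ01 : ∀ u, 0 ≤ γ u ∧ γ u ≤ 1) (hγ_one : ∀ u ∈ Icc 0 ε, γ u = 1) :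
    (n + 1) / (2 ^ (n + 1) * ε) ≤
      (∫ u in 0..2 * ε, n * γ u * u ^ (n - 1)) / ∫ u in 0..2 * ε, γ u * u ^ n := by
  have hεc : ε ≤ 2 * ε := by linarith
  have h_num : ε ^ n ≤ ∫ u in 0..2 * ε, n * γ u * u ^ (n - 1) := by
    have h := pow_succ_div_le_integral_mul_pow_s5 hγ (fun u => (hγ01 u).1) hγ_one hε.le hεc (n - 1)
    rw [Nat.sub_add_cancel hn, Nat.cast_pred hn, sub_add_cancel] at h
    simp_rw [mul_assoc, intervalIntegral.integral_const_mul]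
    rwa [div_le_iff₀' (by positivity)] at h
  have h_den := integral_mul_pow_le hγ (fun u => (hγ01 u).2) (by linarith : (0 : ℝ) ≤ 2 * ε) n
  have h_den_pos : 0 < ∫ u in 0..2 * ε, γ u * u ^ n :=
    (by positivity : (0 : ℝ) < ε ^ (n + 1) / (n + 1)).trans_le
      (pow_succ_div_le_integral_mul_pow_s5 hγ (fun u => (hγ01 u).1) hγ_one hε.le hεc n)
  rw [div_le_div_iff₀ (by positivity) h_den_pos]
  rw [le_div_iff₀ (by positivity), mul_pow, pow_succ ε] at h_den
  nlinarith [mul_le_mul_of_nonneg_right h_num (by positivity : (0 : ℝ) ≤ 2 ^ (n + 1) * ε)]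

theorem integral_deriv_deriv_const_mul_primitive_cutoff_eq_zero {ψ ψ' ψ'' γ : ℝ → ℝ}
    {a b : ℝ} {n : ℕ} (c : ℝ) (hn : n ≠ 0) (hab : a ≤ b)
    (hψ : ∀ r ∈ Icc a b, HasDerivAt ψ (ψ' r) r) (hψ' : ∀ r ∈ Icc a b, HasDerivAt ψ' (ψ'' r) r)
    (hψ'' : ContinuousOn ψ'' (Icc a b)) (hγ : ContDiff ℝ 1 γ) (hγa : γ (ψ a) = 0)
    (hψb : ψ b = 0) :
    ∫ x in a..b, deriv (deriv fun r => c * ∫ s in a..r, γ (ψ s) * ψ s ^ n * ψ' s) x = 0 := by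
  have hψc : ContinuousOn ψ (Icc a b) := fun r hr => (hψ r hr).continuousAt.continuousWithinAt
  have hψ'c : ContinuousOn ψ' (Icc a b) := fun r hr => (hψ' r hr).continuousAt.continuousWithinAt
  have hγc : Continuous γ := hγ.continuous
  have hγ'c : Continuous (deriv γ) := hγ.continuous_deriv le_rfl
  have hg (x : ℝ) (hx : x ∈ Icc a b) : HasDerivAt (fun s => γ (ψ s) * ψ s ^ n * ψ' s)
      ((deriv γ (ψ x) * ψ' x * ψ x ^ n + γ (ψ x) * (n * ψ x ^ (n - 1) * ψ' x)) * ψ' x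
        + γ (ψ x) * ψ x ^ n * ψ'' x) x :=
    ((((hγ.differentiable one_ne_zero) (ψ x)).hasDerivAt.comp x (hψ x hx)).mul
      ((hψ x hx).pow n)).mul (hψ' x hx)
  rw [integral_deriv_deriv_const_mul_primitive c hab hg (by fun_prop)]
  simp [hγa, hψb, hn]

theorem mul_succ_div_le_integral_cutoff_mul_deriv_sq {ψ ψ' γ : ℝ → ℝ} {a b ε μ : ℝ} {n : ℕ}
    (hn : 1 ≤ n) (hε : 0 < ε) (hab : a ≤ b) (hψ : ∀ r ∈ Icc a b, HasDerivAt ψ (ψ' r) r)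
    (hψ' : ContinuousOn ψ' (Icc a b)) (hψa : ψ a = 2 * ε) (hψb : ψ b = 0)
    (hψ_nonneg : ∀ r ∈ Icc a b, 0 ≤ ψ r) (hμ : 0 ≤ μ) (hψ'_le : ∀ r ∈ Icc a b, μ ≤ -ψ' r)
    (hγ : Continuous γ) (hγ01 : ∀ u, 0 ≤ γ u ∧ γ u ≤ 1) (hγ_one : ∀ u ∈ Icc 0 ε, γ u = 1) :
    μ * (n + 1) / (2 ^ (n + 1) * ε) ≤
      ∫ r in a..b, n * γ (ψ r) * ψ r ^ (n - 1) * ψ' r ^ 2 / ∫ u in 0..2 * ε, γ u * u ^ n := by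
  have h := mul_integral_le_integral_comp_mul_deriv_sq (G := fun u => n * γ u * u ^ (n - 1))
    hab hψ hψ' hμ hψ'_le (by fun_prop) fun r hr => by
      have := hψ_nonneg r hr; have := (hγ01 (ψ r)).1; positivity
  rw [hψa, hψb] at h
  have h_den_nonneg : 0 ≤ ∫ u in 0..2 * ε, γ u * u ^ n :=
    integral_nonneg (by linarith) fun u hu => mul_nonneg (hγ01 u).1 (pow_nonneg hu.1 n)
  rw [integral_div, mul_div_assoc]
  calc μ * ((n + 1) / (2 ^ (n + 1) * ε))
      ≤ μ * ((∫ u in 0..2 * ε, n * γ u * u ^ (n - 1)) / ∫ u in 0..2 * ε, γ u * u ^ n) :=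
        mul_le_mul_of_nonneg_left (succ_div_le_integral_div_integral hn hε hγ hγ01 hγ_one) hμ
    _ ≤ _ := by
        rw [← mul_div_assoc]
        exact div_le_div_of_nonneg_right h h_den_nonneg

theorem stmt_5_general (n : ℕ) (hn : 1 ≤ n) (ε lam M a b : ℝ) (hε : 0 < ε)
    (hlam : lam ∈ Set.Ioo (0 : ℝ) 1) (hab : a < b)
    (ψ ψ' ψ'' : ℝ → ℝ)
    (hψd : ∀ r ∈ Set.Icc a b, HasDerivAt ψ (ψ' r) r)
    (hψd2 : ∀ r ∈ Set.Icc a b, HasDerivAt ψ' (ψ'' r) r)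
    (hψ''cont : ContinuousOn ψ'' (Set.Icc a b))
    (hψa : ψ a = 2 * ε) (hψb : ψ b = 0)
    (hψ'bd : ∀ r ∈ Set.Icc a b, -1 - lam ≤ ψ' r ∧ ψ' r ≤ -(1 - lam))
    (γ : ℝ → ℝ) (hγ : ContDiff ℝ 1 γ)
    (hγ01 : ∀ ρ, 0 ≤ γ ρ ∧ γ ρ ≤ 1)
    (hγ1 : ∀ ρ ∈ Set.Icc (0 : ℝ) ε, γ ρ = 1)
    (hγ0 : ∀ ρ, 2 * ε ≤ ρ → γ ρ = 0)
    (D : ℝ) (hD : D = ∫ s in a..b, γ (ψ s) * ψ s ^ n * ψ' s)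
    (F : ℝ → ℝ) (hF : ∀ r, F r = (1 / D) * ∫ s in a..r, γ (ψ s) * ψ s ^ n * ψ' s)
    (K : ℝ → ℝ)
    (hKbd : ∀ r ∈ Set.Icc a b, |K r| ≤ M) :
    (∫ r in a..b, deriv (deriv F) r) +
      (∫ r in a..b, (n : ℝ) * γ (ψ r) * ψ r ^ (n - 1) * (ψ' r) ^ 2 / (-D)) +
      (∫ r in a..b, F r * K r) ≥
      (1 - lam) * (n + 1) / (2 ^ (n + 1) * ε) - (b - a) * M := by
  have hψ'c : ContinuousOn ψ' (Icc a b) := fun r hr => (hψd2 r hr).continuousAt.continuousWithinAt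
  have hψ_mem (r : ℝ) (hr : r ∈ Icc a b) : ψ r ∈ Icc 0 (2 * ε) := hψa ▸ hψb ▸
    mem_Icc_of_hasDerivAt_nonpos hψd (fun x hx => by linarith [(hψ'bd x hx).2, hlam.2]) hr
  have hsub (r : ℝ) (hr : r ∈ Icc a b) :
      ∫ s in a..r, γ (ψ s) * ψ s ^ n * ψ' s = ∫ u in 2 * ε..ψ r, γ u * u ^ n := by
    have hr_sub : uIcc a r ⊆ Icc a b := uIcc_subset_Icc ⟨le_rfl, hr.1.trans hr.2⟩ hr
    rw [← hψa]
    exact integral_comp_mul_deriv (g := fun u => γ u * u ^ n) (fun x hx => hψd x (hr_sub hx))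
      (hψ'c.mono hr_sub) (hγ.continuous.mul (continuous_pow n))
  have hDJ : D = -∫ u in 0..2 * ε, γ u * u ^ n := by
    rw [hD, hsub b ⟨hab.le, le_rfl⟩, hψb, integral_symm]
  have h_first : ∫ r in a..b, deriv (deriv F) r = 0 := by
    rw [show F = _ from funext hF]
    exact integral_deriv_deriv_const_mul_primitive_cutoff_eq_zero _ (by omega) hab.le hψd hψd2
      hψ''cont hγ (hγ0 _ hψa.ge) hψb
  have h_second : (1 - lam) * (n + 1) / (2 ^ (n + 1) * ε) ≤
      ∫ r in a..b, (n : ℝ) * γ (ψ r) * ψ r ^ (n - 1) * (ψ' r) ^ 2 / (-D) := by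
    rw [hDJ, neg_neg]
    exact mul_succ_div_le_integral_cutoff_mul_deriv_sq hn hε hab.le hψd hψ'c hψa hψb
      (fun r hr => (hψ_mem r hr).1) (by linarith [hlam.2])
      (fun r hr => by linarith [(hψ'bd r hr).2]) hγ.continuous hγ01 hγ1
  have h_third : -((b - a) * M) ≤ ∫ r in a..b, F r * K r := by
    refine neg_mul_le_integral_of_abs_le hab.le fun r hr => ?_
    have hF_le : |F r| ≤ 1 := by
      rw [hF, hsub r hr, hDJ, abs_mul, abs_div, abs_one, abs_neg, div_mul_eq_mul_div, one_mul]
      exact div_le_one_of_le₀ ((abs_integral_le_integral_of_mem_Icc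
        (hγ.continuous.mul (continuous_pow n)) (fun u hu => mul_nonneg (hγ01 u).1
          (pow_nonneg hu.1 n)) (hψ_mem r hr)).trans (le_abs_self _)) (abs_nonneg _)
    rw [abs_mul]
    exact (mul_le_of_le_one_left (abs_nonneg _) hF_le).trans (hKbd r hr)
  linarith

/-- Analytic core of the paper's Proposition 5.2: for the constructed cumulative
distribution function `F` and any integrable `K` with `|K| ≤ M` on `[a,b]`,
`∫_a^b F'' + ∫_a^b n γ(ψ) ψ^{n-1} (ψ')²/(-D) + ∫_a^b F·K ≥ (1-λ)(n+1)/(2^{n+1}ε) - (b-a)M`. -/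
theorem stmt_5 (n : ℕ) (hn : 1 ≤ n) (ε lam M a b : ℝ) (hε : 0 < ε)
    (hlam : lam ∈ Set.Ioo (0 : ℝ) 1) (hM : 0 ≤ M) (hab : a < b)
    (ψ ψ' ψ'' : ℝ → ℝ)
    (hψd : ∀ r ∈ Set.Icc a b, HasDerivAt ψ (ψ' r) r)
    (hψd2 : ∀ r ∈ Set.Icc a b, HasDerivAt ψ' (ψ'' r) r)
    (hψ''cont : ContinuousOn ψ'' (Set.Icc a b))
    (hψa : ψ a = 2 * ε) (hψb : ψ b = 0)
    (hψ'bd : ∀ r ∈ Set.Icc a b, -1 - lam ≤ ψ' r ∧ ψ' r ≤ -(1 - lam))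
    (γ : ℝ → ℝ) (hγ : ContDiff ℝ 1 γ)
    (hγ01 : ∀ ρ, 0 ≤ γ ρ ∧ γ ρ ≤ 1)
    (hγ1 : ∀ ρ ∈ Set.Icc (0 : ℝ) ε, γ ρ = 1)
    (hγ0 : ∀ ρ, 2 * ε ≤ ρ → γ ρ = 0)
    (D : ℝ) (hD : D = ∫ s in a..b, γ (ψ s) * ψ s ^ n * ψ' s)
    (F : ℝ → ℝ) (hF : ∀ r, F r = (1 / D) * ∫ s in a..r, γ (ψ s) * ψ s ^ n * ψ' s)
    (K : ℝ → ℝ) (hK : IntervalIntegrable K MeasureTheory.volume a b)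
    (hKbd : ∀ r ∈ Set.Icc a b, |K r| ≤ M) :
    (∫ r in a..b, deriv (deriv F) r) +
      (∫ r in a..b, (n : ℝ) * γ (ψ r) * ψ r ^ (n - 1) * (ψ' r) ^ 2 / (-D)) +
      (∫ r in a..b, F r * K r) ≥
      (1 - lam) * (n + 1) / (2 ^ (n + 1) * ε) - (b - a) * M :=
  stmt_5_general n hn ε lam M a b hε hlam hab ψ ψ' ψ'' hψd hψd2 hψ''cont hψa hψb hψ'bd γ hγ hγ01 hγ1
    hγ0 D hD F hF K hKbd
end

section
/- Let X and Y be measurable spaces, μ₁ and μ₂ probability measures on X, ν a probability measure on Y, and c : X × X → [0,∞] a measurable cost function. Define the cost C on (X × Y) × (X × Y) by C((x,p),(y,q)) := c(x,y). Then the optimal total transport cost for C between the product measures μ₁ ⊗ ν and μ₂ ⊗ ν equals the optimal total transport cost for c between μ₁ and μ₂; that is, the infimum over all couplings π of μ₁ ⊗ ν and μ₂ ⊗ ν of ∫ C dπ equals the infimum over all couplings σ of μ₁ and μ₂ of ∫ c dσ. -/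
/-!
A coupling of `μ₁ ⊗ ν` and `μ₂ ⊗ ν` pushes forward, under the projection to the base
coordinates, to a coupling of `μ₁` and `μ₂` with the same cost. Conversely a coupling `σ` of
`μ₁` and `μ₂` lifts to `σ ⊗ ν` with the fibre coordinate copied to both sides, which again has
the same cost because the cost ignores the fibres.
-/

open MeasureTheory

/-- The set of couplings of two measures: measures on the product whose marginals are the
two given measures. -/
def couplings {α β : Type*} [MeasurableSpace α] [MeasurableSpace β]
    (μ : Measure α) (ν : Measure β) : Set (Measure (α × β)) :=
  {π | π.map Prod.fst = μ ∧ π.map Prod.snd = ν}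

/-- The optimal total transport cost between `μ` and `ν` for the cost `c`. -/
noncomputable def optCost {α β : Type*} [MeasurableSpace α] [MeasurableSpace β]
    (c : α → β → ENNReal) (μ : Measure α) (ν : Measure β) : ENNReal :=
  ⨅ π ∈ couplings μ ν, ∫⁻ z, c z.1 z.2 ∂π

open Function

section

variable {α β γ δ : Type*} [MeasurableSpace α] [MeasurableSpace β] [MeasurableSpace γ]
  [MeasurableSpace δ]

lemma isFiniteMeasure_of_mem_couplings {μ : Measure α} [IsFiniteMeasure μ] {ν : Measure β}
    {π : Measure (α × β)} (hπ : π ∈ couplings μ ν) : IsFiniteMeasure π := by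
  constructor
  have := congrArg (· Set.univ) hπ.1
  simp only [Measure.map_apply measurable_fst MeasurableSet.univ, Set.preimage_univ] at this
  exact this ▸ measure_lt_top μ _

lemma map_prodMap_mem_couplings {μ : Measure α} {ν : Measure β} {π : Measure (α × β)}
    (hπ : π ∈ couplings μ ν) {f : α → γ} {g : β → δ} (hf : Measurable f) (hg : Measurable g) :
    π.map (Prod.map f g) ∈ couplings (μ.map f) (ν.map g) := by
  refine ⟨?_, ?_⟩
  · rw [Measure.map_map measurable_fst (hf.prodMap hg), ← hπ.1,
      Measure.map_map hf measurable_fst]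
    rfl
  · rw [Measure.map_map measurable_snd (hf.prodMap hg), ← hπ.2,
      Measure.map_map hg measurable_snd]
    rfl

lemma optCost_map_le {μ : Measure α} {ν : Measure β} {c : γ → δ → ENNReal}
    (hc : Measurable (uncurry c)) {f : α → γ} {g : β → δ} (hf : Measurable f)
    (hg : Measurable g) :
    optCost c (μ.map f) (ν.map g) ≤ optCost (fun a b => c (f a) (g b)) μ ν := by
  refine le_iInf₂ fun π hπ => (iInf₂_le _ (map_prodMap_mem_couplings hπ hf hg)).trans_eq ?_
  exact lintegral_map hc (hf.prodMap hg)

namespace MeasureTheory.Measure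

noncomputable def liftDiagonal (σ : Measure (α × β)) (ν : Measure γ) :
    Measure ((α × γ) × (β × γ)) :=
  (σ.prod ν).map fun z => ((z.1.1, z.2), (z.1.2, z.2))

lemma measurable_liftDiagonal_map :
    Measurable fun z : (α × β) × γ => ((z.1.1, z.2), (z.1.2, z.2)) := by
  fun_prop

lemma liftDiagonal_mem_couplings {σ : Measure (α × β)} [SFinite σ] {ν : Measure γ} [SFinite ν]
    {μ₁ : Measure α} {μ₂ : Measure β} (hσ : σ ∈ couplings μ₁ μ₂) :
    σ.liftDiagonal ν ∈ couplings (μ₁.prod ν) (μ₂.prod ν) := by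
  refine ⟨?_, ?_⟩
  · conv_rhs => rw [← hσ.1, ← Measure.map_id (μ := ν),
      Measure.map_prod_map _ _ measurable_fst measurable_id]
    exact Measure.map_map measurable_fst measurable_liftDiagonal_map
  · conv_rhs => rw [← hσ.2, ← Measure.map_id (μ := ν),
      Measure.map_prod_map _ _ measurable_snd measurable_id]
    exact Measure.map_map measurable_snd measurable_liftDiagonal_map

lemma lintegral_liftDiagonal {σ : Measure (α × β)} {ν : Measure γ}
    [IsProbabilityMeasure ν] {c : α → β → ENNReal} (hc : Measurable (uncurry c)) :
    ∫⁻ z, c z.1.1 z.2.1 ∂σ.liftDiagonal ν = ∫⁻ z, c z.1 z.2 ∂σ := by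
  rw [liftDiagonal, lintegral_map (by fun_prop) measurable_liftDiagonal_map]
  calc ∫⁻ z, c z.1.1 z.1.2 ∂σ.prod ν
      = ∫⁻ z, c z.1 z.2 ∂(σ.prod ν).map Prod.fst := (lintegral_map hc measurable_fst).symm
    _ = ∫⁻ z, c z.1 z.2 ∂σ := by rw [Measure.map_fst_prod, measure_univ, one_smul]

end MeasureTheory.Measure

lemma optCost_prod_le {μ₁ : Measure α} [IsFiniteMeasure μ₁] {μ₂ : Measure β} {ν : Measure γ}
    [IsProbabilityMeasure ν] {c : α → β → ENNReal} (hc : Measurable (uncurry c)) :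
    optCost (fun zp wq : _ × γ => c zp.1 wq.1) (μ₁.prod ν) (μ₂.prod ν) ≤ optCost c μ₁ μ₂ := by
  refine le_iInf₂ fun σ hσ => ?_
  have := isFiniteMeasure_of_mem_couplings hσ
  exact (iInf₂_le _ (Measure.liftDiagonal_mem_couplings hσ)).trans_eq
    (Measure.lintegral_liftDiagonal hc)

end

theorem stmt_7_general {X Y : Type*} [MeasurableSpace X] [MeasurableSpace Y]
    (μ₁ μ₂ : Measure X) (ν : Measure Y)
    [IsProbabilityMeasure μ₁] [IsProbabilityMeasure ν]
    (c : X → X → ENNReal) (hc : Measurable fun q : X × X => c q.1 q.2) :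
    optCost (fun zp wq : X × Y => c zp.1 wq.1) (μ₁.prod ν) (μ₂.prod ν) =
      optCost c μ₁ μ₂ := by
  refine le_antisymm (optCost_prod_le hc) ?_
  calc optCost c μ₁ μ₂
      = optCost c ((μ₁.prod ν).map Prod.fst) ((μ₂.prod ν).map Prod.fst) := by
        simp only [Measure.map_fst_prod, measure_univ, one_smul]
    _ ≤ optCost (fun zp wq : X × Y => c zp.1 wq.1) (μ₁.prod ν) (μ₂.prod ν) :=
        optCost_map_le hc measurable_fst measurable_fst

/-- Measure-theoretic content of the paper's Theorem 3.3: if the cost on a product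
`X × Y` depends only on the `X`-coordinates, then the optimal total transport cost between
the product measures `μ₁ ⊗ ν` and `μ₂ ⊗ ν` equals the optimal total transport cost between
`μ₁` and `μ₂` on the base. -/
theorem stmt_7 {X Y : Type*} [MeasurableSpace X] [MeasurableSpace Y]
    (μ₁ μ₂ : Measure X) (ν : Measure Y)
    [IsProbabilityMeasure μ₁] [IsProbabilityMeasure μ₂] [IsProbabilityMeasure ν]
    (c : X → X → ENNReal) (hc : Measurable fun q : X × X => c q.1 q.2) :
    optCost (fun zp wq : X × Y => c zp.1 wq.1) (μ₁.prod ν) (μ₂.prod ν) =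
      optCost c μ₁ μ₂ :=
  stmt_7_general μ₁ μ₂ ν c hc
end
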